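/- For natural numbers n ≥ 1 and a ≥ b ≥ 1, the number of independent sets in the broken chainsaw graph P(n, a, b) equals U_{n+2}(a, -b), the (n+2)-nd term of the Lucas sequence of the first kind with parameters (a, -b). -/
import Mathlib


open Classical in
/-- Number of independent sets (including the empty set) of a finite graph. -/
noncomputable def numIndepSets {V : Type*} [Fintype V] (G : SimpleGraph V) : ℕ :=
  (Finset.univ.powerset.filter fun s : Finset V =>
    ∀ v ∈ s, ∀ w ∈ s, ¬ G.Adj v w).card

open Classical in
/-- Number of independent sets of size exactly `t`. -/
noncomputable def numIndepSetsOfSize {V : Type*} [Fintype V] (G : SimpleGraph V) (t : ℕ) : ℕ :=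
  (Finset.univ.powerset.filter fun s : Finset V =>
    (∀ v ∈ s, ∀ w ∈ s, ¬ G.Adj v w) ∧ s.card = t).card

/-- The chainsaw graph `C(m, a, b)`: an `m`-cycle of chain vertices `(v, 0)`,
with an `a`-clique attached at each chain vertex (the vertices `(v, i)`),
and each chain vertex `v` additionally joined to the `a - b` blade vertices
`(v+1, j)` with `1 ≤ j ≤ a - b` of the clique at `v + 1`. -/
def chainsawGraph (m a b : ℕ) : SimpleGraph (ZMod m × Fin a) :=
  SimpleGraph.fromRel (fun x y =>
    x.1 = y.1 ∨ (y.1 = x.1 + 1 ∧ x.2.val = 0 ∧ y.2.val ≤ a - b))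

/-- The broken chainsaw graph `P(n, a, b)`: the chainsaw graph `C(n+1, a, b)`
with chain vertex `0` (and all incident edges) deleted. -/
def brokenChainsawGraph (n a b : ℕ) :
    SimpleGraph ({x : ZMod (n + 1) × Fin a | ¬(x.1 = 0 ∧ x.2.val = 0)} : Set _) :=
  (chainsawGraph (n + 1) a b).induce _

/-- Lucas sequence of the first kind: `U 0 = 0`, `U 1 = 1`,
`U (n+2) = P * U (n+1) - Q * U n`. -/
def lucasU (P Q : ℤ) : ℕ → ℤ
  | 0 => 0
  | 1 => 1
  | n + 2 => P * lucasU P Q (n + 1) - Q * lucasU P Q n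

/-- Lucas sequence of the second kind: `V 0 = 2`, `V 1 = P`,
`V (n+2) = P * V (n+1) - Q * V n`. -/
def lucasV (P Q : ℤ) : ℕ → ℤ
  | 0 => 2
  | 1 => P
  | n + 2 => P * lucasV P Q (n + 1) - Q * lucasV P Q n

set_option maxHeartbeats 1000000
namespace BCGaux
open Finset

variable (a b : ℕ)

def zer (x : Option (Fin a)) : Prop := ∃ j, x = some j ∧ j.val = 0

def low (x : Option (Fin a)) : Prop := ∃ j, x = some j ∧ j.val ≤ a - b

def ok (x y : Option (Fin a)) : Prop := zer a x → ¬ low a b y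

instance : DecidablePred (zer a) := fun x => by unfold zer; infer_instance
instance : DecidablePred (low a b) := fun x => by unfold low; infer_instance
instance : ∀ x, DecidablePred (ok a b x) := fun x y => by unfold ok; infer_instance

lemma zer_low {x : Option (Fin a)} (h : zer a x) : low a b x := by
  obtain ⟨j, hj, hv⟩ := h; exact ⟨j, hj, by omega⟩

lemma card_low (hb : 1 ≤ b) (hab : b ≤ a) :
    #(univ.filter (low a b) : Finset (Option (Fin a))) = a - b + 1 := by
  have hlt : a - b < a := by omega
  have : (univ.filter (low a b) : Finset (Option (Fin a)))
      = (univ.filter (fun j : Fin a => j ≤ ⟨a - b, hlt⟩)).map Function.Embedding.some := by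
    ext x
    cases x with
    | none => simp [low]
    | some j => simp [low, Fin.le_def]
  rw [this, card_map]
  have : (univ.filter (fun j : Fin a => j ≤ ⟨a - b, hlt⟩)) = Finset.Iic ⟨a - b, hlt⟩ := by
    ext j; simp
  rw [this, Fin.card_Iic]

lemma card_nonlow (hb : 1 ≤ b) (hab : b ≤ a) :
    #(univ.filter (fun x => ¬ low a b x) : Finset (Option (Fin a))) = b := by
  have h1 := Finset.card_filter_add_card_filter_not (s := (univ : Finset (Option (Fin a))))
    (low a b)
  rw [card_low a b hb hab, card_univ, Fintype.card_option, Fintype.card_fin] at h1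
  omega

lemma card_zer (ha : 0 < a) :
    #(univ.filter (zer a) : Finset (Option (Fin a))) = 1 := by
  have : (univ.filter (zer a) : Finset (Option (Fin a))) = {some ⟨0, ha⟩} := by
    ext x
    cases x with
    | none => simp [zer]
    | some j =>
      simp only [zer, mem_filter, mem_univ, true_and, mem_singleton, Option.some.injEq]
      constructor
      · rintro ⟨j', hj', hv⟩
        cases hj'
        exact Fin.ext hv
      · rintro rfl; exact ⟨_, rfl, rfl⟩
  rw [this, card_singleton]

lemma card_nz_low (hb : 1 ≤ b) (hab : b ≤ a) :
    #(univ.filter (fun x => ¬ zer a x ∧ low a b x) : Finset (Option (Fin a))) = a - b := by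
  have h1 := Finset.card_filter_add_card_filter_not
    (s := (univ.filter (low a b) : Finset (Option (Fin a)))) (zer a)
  rw [Finset.filter_filter, Finset.filter_filter, card_low a b hb hab] at h1
  have h2 : (univ.filter (fun x => low a b x ∧ zer a x) : Finset (Option (Fin a)))
      = univ.filter (zer a) := by
    apply Finset.filter_congr
    intro x _
    exact ⟨fun h => h.2, fun h => ⟨zer_low a b h, h⟩⟩
  rw [h2, card_zer a (by omega)] at h1
  have h3 : (univ.filter (fun x => ¬ zer a x ∧ low a b x) : Finset (Option (Fin a)))
      = univ.filter (fun x => low a b x ∧ ¬ zer a x) := by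
    apply Finset.filter_congr
    intro x _
    exact and_comm
  rw [h3]
  omega


lemma cnt_low_low (hb : 1 ≤ b) (hab : b ≤ a) {y : Option (Fin a)} (hy : low a b y) :
    #(univ.filter (fun x => ok a b x y ∧ low a b x) : Finset (Option (Fin a))) = a - b := by
  rw [show (univ.filter (fun x => ok a b x y ∧ low a b x) : Finset (Option (Fin a)))
      = univ.filter (fun x => ¬ zer a x ∧ low a b x) from
    Finset.filter_congr (fun x _ => by
      unfold ok
      constructor
      · rintro ⟨h1, h2⟩; exact ⟨fun hz => (h1 hz) hy, h2⟩
      · rintro ⟨h1, h2⟩; exact ⟨fun hz => absurd hz h1, h2⟩)]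
  exact card_nz_low a b hb hab

lemma cnt_low_high (hb : 1 ≤ b) (hab : b ≤ a) {y : Option (Fin a)} (hy : low a b y) :
    #(univ.filter (fun x => ok a b x y ∧ ¬ low a b x) : Finset (Option (Fin a))) = b := by
  rw [show (univ.filter (fun x => ok a b x y ∧ ¬ low a b x) : Finset (Option (Fin a)))
      = univ.filter (fun x => ¬ low a b x) from
    Finset.filter_congr (fun x _ => by
      unfold ok
      constructor
      · rintro ⟨_, h2⟩; exact h2
      · intro h2; exact ⟨fun hz => absurd (zer_low a b hz) h2, h2⟩)]
  exact card_nonlow a b hb hab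

lemma cnt_high_low (hb : 1 ≤ b) (hab : b ≤ a) {y : Option (Fin a)} (hy : ¬ low a b y) :
    #(univ.filter (fun x => ok a b x y ∧ low a b x) : Finset (Option (Fin a))) = a - b + 1 := by
  rw [show (univ.filter (fun x => ok a b x y ∧ low a b x) : Finset (Option (Fin a)))
      = univ.filter (low a b) from
    Finset.filter_congr (fun x _ => by
      unfold ok
      exact ⟨fun h => h.2, fun h => ⟨fun _ => hy, h⟩⟩)]
  exact card_low a b hb hab

lemma cnt_high_high (hb : 1 ≤ b) (hab : b ≤ a) {y : Option (Fin a)} (hy : ¬ low a b y) :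
    #(univ.filter (fun x => ok a b x y ∧ ¬ low a b x) : Finset (Option (Fin a))) = b := by
  rw [show (univ.filter (fun x => ok a b x y ∧ ¬ low a b x) : Finset (Option (Fin a)))
      = univ.filter (fun x => ¬ low a b x) from
    Finset.filter_congr (fun x _ => by
      unfold ok
      exact ⟨fun h => h.2, fun h => ⟨fun _ => hy, h⟩⟩)]
  exact card_nonlow a b hb hab

def Valid (n : ℕ) (h : Fin (n+1) → Option (Fin a)) : Prop :=
  (∀ i : Fin n, ok a b (h i.castSucc) (h i.succ)) ∧ ¬ zer a (h (Fin.last n))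

instance (n : ℕ) : DecidablePred (Valid a b n) := fun h => by unfold Valid; infer_instance

lemma valid_cons (n : ℕ) (x : Option (Fin a)) (h : Fin (n+1) → Option (Fin a)) :
    Valid a b (n+1) (Fin.cons x h) ↔ ok a b x (h 0) ∧ Valid a b n h := by
  unfold Valid
  rw [Fin.forall_fin_succ]
  simp only [Fin.castSucc_zero, Fin.cons_zero, Fin.cons_succ, ← Fin.succ_castSucc,
    ← Fin.succ_last]
  tauto

lemma key (C : Option (Fin a) → Prop) [DecidablePred C] (n : ℕ) :
    #(univ.filter fun h : Fin (n+2) → Option (Fin a) => Valid a b (n+1) h ∧ C (h 0))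
    = ∑ h ∈ univ.filter (Valid a b n),
        #(univ.filter fun x : Option (Fin a) => ok a b x (h 0) ∧ C x) := by
  classical
  rw [← Fintype.card_subtype]
  have e1 : {h : Fin (n+2) → Option (Fin a) // Valid a b (n+1) h ∧ C (h 0)}
      ≃ {q : (Fin (n+1) → Option (Fin a)) × Option (Fin a) //
          Valid a b n q.1 ∧ ok a b q.2 (q.1 0) ∧ C q.2} := by
    refine (Equiv.subtypeEquiv ((Fin.consEquiv (fun _ => Option (Fin a))).symm.trans
      (Equiv.prodComm _ _)) ?_)
    intro h
    obtain ⟨x, t, rfl⟩ : ∃ x t, h = Fin.cons x t :=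
      ⟨h 0, fun i => h i.succ, (Fin.cons_self_tail h).symm⟩
    simp only [Equiv.trans_apply, Equiv.prodComm_apply]
    have hsymm : (Fin.consEquiv (fun _ : Fin (n+2) => Option (Fin a))).symm (Fin.cons x t)
        = (x, t) := by
      rw [Equiv.symm_apply_eq]; rfl
    rw [hsymm]
    simp only [Fin.cons_zero, Prod.swap]
    rw [valid_cons]
    tauto
  rw [Fintype.card_congr e1]
  rw [Fintype.card_congr (Equiv.subtypeProdEquivSigmaSubtype
    (fun h x => Valid a b n h ∧ ok a b x (h 0) ∧ C x))]
  rw [Fintype.card_sigma]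
  rw [← Finset.sum_filter_add_sum_filter_not univ (Valid a b n)]
  have hz : ∑ h ∈ univ.filter (fun h => ¬ Valid a b n h),
      Fintype.card {x : Option (Fin a) // Valid a b n h ∧ ok a b x (h 0) ∧ C x} = 0 := by
    apply Finset.sum_eq_zero
    intro h hh
    rw [mem_filter] at hh
    rw [Fintype.card_eq_zero_iff]
    exact ⟨fun x => hh.2 x.2.1⟩
  rw [hz, add_zero]
  apply Finset.sum_congr rfl
  intro h hh
  rw [mem_filter] at hh
  rw [Fintype.card_subtype]
  congr 1
  apply Finset.filter_congr
  intro x _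
  tauto


def NL (n : ℕ) : ℕ :=
  #(univ.filter fun h : Fin (n+1) → Option (Fin a) => Valid a b n h ∧ low a b (h 0))

def NH (n : ℕ) : ℕ :=
  #(univ.filter fun h : Fin (n+1) → Option (Fin a) => Valid a b n h ∧ ¬ low a b (h 0))

lemma NL_succ (hb : 1 ≤ b) (hab : b ≤ a) (n : ℕ) :
    NL a b (n+1) = (a - b) * NL a b n + (a - b + 1) * NH a b n := by
  unfold NL NH
  rw [key a b (low a b) n]
  rw [← Finset.sum_filter_add_sum_filter_not (univ.filter (Valid a b n))
    (fun h => low a b (h 0))]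
  rw [Finset.filter_filter, Finset.filter_filter]
  congr 1
  · rw [Finset.sum_congr rfl (fun h hh => cnt_low_low a b hb hab (mem_filter.mp hh).2.2)]
    rw [Finset.sum_const, smul_eq_mul, mul_comm]
  · rw [Finset.sum_congr rfl (fun h hh => cnt_high_low a b hb hab (mem_filter.mp hh).2.2)]
    rw [Finset.sum_const, smul_eq_mul, mul_comm]

lemma NH_succ (hb : 1 ≤ b) (hab : b ≤ a) (n : ℕ) :
    NH a b (n+1) = b * NL a b n + b * NH a b n := by
  unfold NL NH
  rw [key a b (fun x => ¬ low a b x) n]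
  rw [← Finset.sum_filter_add_sum_filter_not (univ.filter (Valid a b n))
    (fun h => low a b (h 0))]
  rw [Finset.filter_filter, Finset.filter_filter]
  congr 1
  · rw [Finset.sum_congr rfl (fun h hh => cnt_low_high a b hb hab (mem_filter.mp hh).2.2)]
    rw [Finset.sum_const, smul_eq_mul, mul_comm]
  · rw [Finset.sum_congr rfl (fun h hh => cnt_high_high a b hb hab (mem_filter.mp hh).2.2)]
    rw [Finset.sum_const, smul_eq_mul, mul_comm]

lemma card_fun1 (p : Option (Fin a) → Prop) [DecidablePred p] :
    #(univ.filter fun h : Fin 1 → Option (Fin a) => p (h 0)) = #(univ.filter p) := by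
  rw [← Fintype.card_subtype, ← Fintype.card_subtype]
  exact Fintype.card_congr (Equiv.subtypeEquiv (Equiv.funUnique (Fin 1) _) (fun h => by
    rw [Equiv.funUnique_apply]
    rw [show (default : Fin 1) = 0 from Fin.eq_zero _]))

lemma valid_zero_iff (h : Fin 1 → Option (Fin a)) :
    Valid a b 0 h ↔ ¬ zer a (h 0) := by
  unfold Valid
  rw [show (Fin.last 0) = 0 from rfl]
  simp [IsEmpty.forall_iff]

lemma NL_zero (hb : 1 ≤ b) (hab : b ≤ a) : NL a b 0 = a - b := by
  unfold NL
  calc #(univ.filter fun h : Fin 1 → Option (Fin a) => Valid a b 0 h ∧ low a b (h 0))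
      = #(univ.filter fun h : Fin 1 → Option (Fin a) =>
          (fun x => ¬ zer a x ∧ low a b x) (h 0)) := by
        apply congrArg
        apply Finset.filter_congr
        intro h _
        rw [valid_zero_iff]
    _ = #(univ.filter fun x : Option (Fin a) => ¬ zer a x ∧ low a b x) := card_fun1 a (fun x => ¬ zer a x ∧ low a b x)
    _ = a - b := card_nz_low a b hb hab

lemma NH_zero (hb : 1 ≤ b) (hab : b ≤ a) : NH a b 0 = b := by
  unfold NH
  calc #(univ.filter fun h : Fin 1 → Option (Fin a) => Valid a b 0 h ∧ ¬ low a b (h 0))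
      = #(univ.filter fun h : Fin 1 → Option (Fin a) =>
          (fun x => ¬ low a b x) (h 0)) := by
        apply congrArg
        apply Finset.filter_congr
        intro h _
        rw [valid_zero_iff]
        exact ⟨fun hh => hh.2, fun hh => ⟨fun hz => hh (zer_low a b hz), hh⟩⟩
    _ = #(univ.filter fun x : Option (Fin a) => ¬ low a b x) := card_fun1 a (fun x => ¬ low a b x)
    _ = b := card_nonlow a b hb hab


lemma partA (hb : 1 ≤ b) (hab : b ≤ a) : ∀ n : ℕ,
    ((NL a b n + NH a b n : ℕ) : ℤ) = lucasU (a : ℤ) (-(b : ℤ)) (n+2) ∧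
    ((NH a b n : ℕ) : ℤ) = (b : ℤ) * lucasU (a : ℤ) (-(b : ℤ)) (n+1) := by
  intro n
  induction n with
  | zero =>
    rw [NL_zero a b hb hab, NH_zero a b hb hab]
    simp only [lucasU]
    push_cast [Nat.cast_sub hab]
    constructor <;> ring
  | succ n ih =>
    obtain ⟨ih1, ih2⟩ := ih
    rw [NL_succ a b hb hab, NH_succ a b hb hab]
    have hU : lucasU (a : ℤ) (-(b : ℤ)) (n+3)
        = (a : ℤ) * lucasU (a : ℤ) (-(b : ℤ)) (n+2) + (b : ℤ) * lucasU (a : ℤ) (-(b : ℤ)) (n+1) := by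
      show lucasU (a : ℤ) (-(b : ℤ)) (n+1+2) = _
      rw [show lucasU (a : ℤ) (-(b : ℤ)) (n+1+2)
        = (a : ℤ) * lucasU (a : ℤ) (-(b : ℤ)) (n+1+1) - (-(b : ℤ)) * lucasU (a : ℤ) (-(b : ℤ)) (n+1)
        from rfl]
      ring_nf
    constructor
    · push_cast [Nat.cast_sub hab]
      rw [show ((n:ℕ)+1+2 : ℕ) = n+3 from rfl] at *
      rw [hU]
      push_cast at ih1 ih2 ⊢
      linear_combination (a : ℤ) * ih1 + ih2
    · push_cast [Nat.cast_sub hab]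
      push_cast at ih1 ih2 ⊢
      linear_combination (b : ℤ) * ih1

lemma total_count (n : ℕ) :
    #((univ : Finset (Fin (n+1) → Option (Fin a))).filter (Valid a b n))
      = NL a b n + NH a b n := by
  have h := Finset.card_filter_add_card_filter_not
    (s := (univ : Finset (Fin (n+1) → Option (Fin a))).filter (Valid a b n))
    (fun h => low a b (h 0))
  rw [Finset.filter_filter, Finset.filter_filter] at h
  unfold NL NH
  exact h.symm

end BCGaux


section PartB

open Finset BCGaux

variable (n a b : ℕ)

/-- position `k` corresponds to chain vertex `k+1` -/
def epos (k : Fin (n+1)) : ZMod (n+1) := (k.val : ZMod (n+1)) + 1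

/-- inverse of `epos` -/
def iposn (u : ZMod (n+1)) : Fin (n+1) := ⟨(u - 1).val, ZMod.val_lt _⟩

lemma epos_ipos (u : ZMod (n+1)) : epos n (iposn n u) = u := by
  unfold epos iposn
  simp only
  rw [ZMod.natCast_rightInverse (u - 1)]
  ring

lemma ipos_epos (k : Fin (n+1)) : iposn n (epos n k) = k := by
  unfold epos iposn
  apply Fin.ext
  simp only [add_sub_cancel_right]
  exact ZMod.val_cast_of_lt k.isLt

lemma epos_inj {k k' : Fin (n+1)} (h : epos n k = epos n k') : k = k' := by
  rw [← ipos_epos n k, ← ipos_epos n k', h]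

lemma epos_succ (i : Fin n) : epos n i.succ = epos n i.castSucc + 1 := by
  unfold epos
  simp only [Fin.val_succ, Fin.coe_castSucc]
  push_cast
  ring

lemma epos_last : epos n (Fin.last n) = 0 := by
  unfold epos
  simp only [Fin.val_last]
  have h := ZMod.natCast_self (n+1)
  push_cast at h
  exact h

lemma succ_ne (hn : 1 ≤ n) (u : ZMod (n+1)) : u + 1 ≠ u := by
  haveI : Fact (1 < n + 1) := ⟨by omega⟩
  intro H
  have h1 : (1 : ZMod (n+1)) = 0 := by
    have := H
    nth_rewrite 2 [← add_zero u] at this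
    exact add_left_cancel this
  exact one_ne_zero h1

/-- the vertex set of the broken chainsaw graph -/
abbrev BV := ({x : ZMod (n + 1) × Fin a | ¬(x.1 = 0 ∧ x.2.val = 0)} : Set _)

lemma adj_iff (v w : BV n a) :
    (brokenChainsawGraph n a b).Adj v w ↔ v.val ≠ w.val ∧
      ((v.val.1 = w.val.1 ∨ (w.val.1 = v.val.1 + 1 ∧ v.val.2.val = 0 ∧ w.val.2.val ≤ a - b)) ∨
       (w.val.1 = v.val.1 ∨ (v.val.1 = w.val.1 + 1 ∧ w.val.2.val = 0 ∧ v.val.2.val ≤ a - b))) := by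
  show (chainsawGraph (n+1) a b).Adj v.val w.val ↔ _
  rw [chainsawGraph, SimpleGraph.fromRel_adj]

/-- the set of vertices of `s` lying in fiber `epos k`, as indices -/
def Bset (s : Finset (BV n a)) (k : Fin (n+1)) : Finset (Fin a) :=
  univ.filter (fun j => (epos n k, j) ∈ s.image Subtype.val)

def pick {a : ℕ} (t : Finset (Fin a)) : Option (Fin a) :=
  if H : t.Nonempty then some (t.min' H) else none

lemma pick_empty {a : ℕ} : pick (∅ : Finset (Fin a)) = none := by
  unfold pick
  rw [dif_neg (by simp)]

lemma pick_singleton {a : ℕ} (j : Fin a) : pick ({j} : Finset (Fin a)) = some j := by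
  unfold pick
  rw [dif_pos ⟨j, mem_singleton_self j⟩]
  simp

lemma pick_mem {a : ℕ} {t : Finset (Fin a)} {j : Fin a} (h : pick t = some j) : j ∈ t := by
  unfold pick at h
  by_cases H : t.Nonempty
  · rw [dif_pos H] at h
    rw [← Option.some_inj.mp h]
    exact t.min'_mem H
  · rw [dif_neg H] at h
    exact absurd h (by simp)

def psiseq (s : Finset (BV n a)) : Fin (n+1) → Option (Fin a) := fun k => pick (Bset n a s k)

def phiset (h : Fin (n+1) → Option (Fin a)) : Finset (BV n a) :=
  univ.filter (fun v => h (iposn n v.val.1) = some v.val.2)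

lemma mem_phiset (h : Fin (n+1) → Option (Fin a)) (v : BV n a) :
    v ∈ phiset n a h ↔ h (iposn n v.val.1) = some v.val.2 := by
  unfold phiset; simp

lemma mem_Bset (s : Finset (BV n a)) (k : Fin (n+1)) (j : Fin a) :
    j ∈ Bset n a s k ↔ ∃ p : ¬((epos n k, j).1 = 0 ∧ (epos n k, j).2.val = 0),
      (⟨(epos n k, j), p⟩ : BV n a) ∈ s := by
  unfold Bset
  simp only [mem_filter, mem_univ, true_and, Finset.mem_image]
  constructor
  · rintro ⟨v, hv, hval⟩
    have p : ¬((epos n k, j).1 = 0 ∧ (epos n k, j).2.val = 0) :=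
      fun hc => v.2 (by rw [hval]; exact hc)
    refine ⟨p, ?_⟩
    have hveq : (⟨(epos n k, j), p⟩ : BV n a) = v := Subtype.ext hval.symm
    rw [hveq]
    exact hv
  · rintro ⟨p, hp⟩
    exact ⟨_, hp, rfl⟩

section WithIndep

variable {n a b}

/-- vertices of an independent set in the same fiber coincide -/
lemma fiber_unique {s : Finset (BV n a)}
    (Hind : ∀ v ∈ s, ∀ w ∈ s, ¬ (brokenChainsawGraph n a b).Adj v w)
    {v w : BV n a} (hv : v ∈ s) (hw : w ∈ s) (hf : v.val.1 = w.val.1) : v = w := by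
  by_contra hne
  apply Hind v hv w hw
  rw [adj_iff n a b]
  exact ⟨fun h => hne (Subtype.ext h), Or.inl (Or.inl hf)⟩

lemma psiseq_eq_some_iff {s : Finset (BV n a)}
    (Hind : ∀ v ∈ s, ∀ w ∈ s, ¬ (brokenChainsawGraph n a b).Adj v w)
    (k : Fin (n+1)) (j : Fin a) :
    psiseq n a s k = some j ↔
      ∃ p : ¬((epos n k, j).1 = 0 ∧ (epos n k, j).2.val = 0),
        (⟨(epos n k, j), p⟩ : BV n a) ∈ s := by
  constructor
  · intro h
    exact (mem_Bset n a s k j).mp (pick_mem h)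
  · intro hmem
    have hj : j ∈ Bset n a s k := (mem_Bset n a s k j).mpr hmem
    have hB : Bset n a s k = {j} := by
      apply Finset.eq_singleton_iff_unique_mem.mpr
      refine ⟨hj, fun j' hj' => ?_⟩
      obtain ⟨p', hp'⟩ := (mem_Bset n a s k j').mp hj'
      obtain ⟨p, hp⟩ := hmem
      have := fiber_unique (b := b) Hind hp' hp rfl
      have := congrArg (fun v : BV n a => v.val.2) this
      simpa using this
    show pick (Bset n a s k) = some j
    rw [hB, pick_singleton]

end WithIndep

section WithIndep2

variable {n a b : ℕ}

lemma psiseq_valid (hn : 1 ≤ n) {s : Finset (BV n a)}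
    (Hind : ∀ v ∈ s, ∀ w ∈ s, ¬ (brokenChainsawGraph n a b).Adj v w) :
    BCGaux.Valid a b n (psiseq n a s) := by
  constructor
  · intro i
    rintro ⟨j0, hj0, hv0⟩ ⟨j1, hj1, hlow⟩
    obtain ⟨p0, hp0⟩ := (psiseq_eq_some_iff (b := b) Hind i.castSucc j0).mp hj0
    obtain ⟨p1, hp1⟩ := (psiseq_eq_some_iff (b := b) Hind i.succ j1).mp hj1
    apply Hind _ hp0 _ hp1
    rw [adj_iff n a b]
    constructor
    · intro hval
      have h1 : epos n i.castSucc = epos n i.succ := congrArg Prod.fst hval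
      rw [epos_succ] at h1
      exact succ_ne n hn _ h1.symm
    · exact Or.inl (Or.inr ⟨epos_succ n i, hv0, hlow⟩)
  · rintro ⟨j, hj, hv⟩
    obtain ⟨p, hp⟩ := (psiseq_eq_some_iff (b := b) Hind (Fin.last n) j).mp hj
    exact p ⟨epos_last n, hv⟩

lemma cross_case {h : Fin (n+1) → Option (Fin a)} (hval : BCGaux.Valid a b n h)
    (v w : BV n a) (hv : h (iposn n v.val.1) = some v.val.2)
    (hw : h (iposn n w.val.1) = some w.val.2)
    (hw1 : w.val.1 = v.val.1 + 1) (hv2 : v.val.2.val = 0) (hw2 : w.val.2.val ≤ a - b) :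
    False := by
  by_cases hk : iposn n v.val.1 = Fin.last n
  · refine v.2 ⟨?_, hv2⟩
    rw [← epos_ipos n v.val.1, hk, epos_last]
  · have hklt : (iposn n v.val.1).val < n := by
      have h1 : (iposn n v.val.1).val < n + 1 := (iposn n v.val.1).isLt
      have h2 : (iposn n v.val.1).val ≠ n := fun hc => hk (Fin.ext hc)
      omega
    set k := iposn n v.val.1 with hkdef
    let i : Fin n := ⟨k.val, hklt⟩
    have hcast : i.castSucc = k := Fin.ext rfl
    have hidxw : iposn n w.val.1 = i.succ := by
      have hew : w.val.1 = epos n i.succ := by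
        rw [epos_succ, hcast, hkdef, epos_ipos, hw1]
      rw [hew, ipos_epos]
    have hok := hval.1 i
    refine hok ⟨v.val.2, ?_, hv2⟩ ⟨w.val.2, ?_, hw2⟩
    · rw [hcast]
      exact hv
    · rw [← hidxw]
      exact hw

lemma phiset_indep {h : Fin (n+1) → Option (Fin a)} (hval : BCGaux.Valid a b n h) :
    ∀ v ∈ phiset n a h, ∀ w ∈ phiset n a h, ¬ (brokenChainsawGraph n a b).Adj v w := by
  intro v hv w hw hadj
  rw [mem_phiset] at hv hw
  rw [adj_iff n a b] at hadj
  obtain ⟨hne, hcase⟩ := hadj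
  have same : ∀ (v w : BV n a), h (iposn n v.val.1) = some v.val.2 →
      h (iposn n w.val.1) = some w.val.2 → v.val.1 = w.val.1 → v.val = w.val := by
    intro v w hv hw hsame
    have h2 : some v.val.2 = some w.val.2 := by
      rw [← hv, ← hw, hsame]
    exact Prod.ext hsame (Option.some_inj.mp h2)
  rcases hcase with (hsame | hcross) | (hsame' | hcross')
  · exact hne (same v w hv hw hsame)
  · exact cross_case hval v w hv hw hcross.1 hcross.2.1 hcross.2.2
  · exact hne (same v w hv hw hsame'.symm)
  · exact cross_case hval w v hw hv hcross'.1 hcross'.2.1 hcross'.2.2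

lemma phiset_psiseq {s : Finset (BV n a)}
    (Hind : ∀ v ∈ s, ∀ w ∈ s, ¬ (brokenChainsawGraph n a b).Adj v w) :
    phiset n a (psiseq n a s) = s := by
  ext v
  rw [mem_phiset, psiseq_eq_some_iff (b := b) Hind]
  constructor
  · rintro ⟨p, hp⟩
    have hveq : (⟨(epos n (iposn n v.val.1), v.val.2), p⟩ : BV n a) = v :=
      Subtype.ext (Prod.ext (epos_ipos n v.val.1) rfl)
    rw [← hveq]
    exact hp
  · intro hv
    have p : ¬((epos n (iposn n v.val.1), v.val.2).1 = 0 ∧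
        (epos n (iposn n v.val.1), v.val.2).2.val = 0) := by
      rw [show (epos n (iposn n v.val.1), v.val.2).1 = v.val.1 from epos_ipos n v.val.1]
      exact fun hc => v.2 hc
    refine ⟨p, ?_⟩
    have hveq : (⟨(epos n (iposn n v.val.1), v.val.2), p⟩ : BV n a) = v :=
      Subtype.ext (Prod.ext (epos_ipos n v.val.1) rfl)
    rw [hveq]
    exact hv

lemma psiseq_phiset {h : Fin (n+1) → Option (Fin a)} (hval : BCGaux.Valid a b n h) :
    psiseq n a (phiset n a h) = h := by
  funext k
  show pick (Bset n a (phiset n a h) k) = h k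
  have hB : ∀ j : Fin a, j ∈ Bset n a (phiset n a h) k ↔ h k = some j := by
    intro j
    rw [mem_Bset]
    constructor
    · rintro ⟨p, hp⟩
      rw [mem_phiset] at hp
      simpa [ipos_epos] using hp
    · intro hj
      have p : ¬((epos n k, j).1 = 0 ∧ (epos n k, j).2.val = 0) := by
        rintro ⟨h0, hj0⟩
        have hk : k = Fin.last n := epos_inj n (by rw [epos_last]; exact h0)
        exact hval.2 ⟨j, by rw [← hk]; exact hj, hj0⟩
      refine ⟨p, ?_⟩
      rw [mem_phiset]
      simpa [ipos_epos] using hj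
  cases hh : h k with
  | none =>
    have : Bset n a (phiset n a h) k = ∅ := by
      apply Finset.eq_empty_iff_forall_notMem.mpr
      intro j hj
      rw [hB j, hh] at hj
      exact absurd hj (by simp)
    rw [this, pick_empty]
  | some j =>
    have : Bset n a (phiset n a h) k = {j} := by
      ext j'
      rw [hB j', hh]
      simp [eq_comm]
    rw [this, pick_singleton]

end WithIndep2

end PartB

theorem numIndepSets_brokenChainsaw (n a b : ℕ) (hn : 1 ≤ n) (hb : 1 ≤ b) (hab : b ≤ a) :
    (numIndepSets (brokenChainsawGraph n a b) : ℤ)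
      = lucasU (a : ℤ) (-(b : ℤ)) (n + 2) := by
  classical
  have hcard : numIndepSets (brokenChainsawGraph n a b)
      = BCGaux.NL a b n + BCGaux.NH a b n := by
    rw [← BCGaux.total_count]
    unfold numIndepSets
    rw [Finset.filter_congr_decidable]
    refine Finset.card_bij' (fun s _ => psiseq n a s) (fun h _ => phiset n a h) ?_ ?_ ?_ ?_
    · intro s hs
      have Hind := (Finset.mem_filter.mp hs).2
      exact Finset.mem_filter.mpr ⟨Finset.mem_univ _, psiseq_valid hn Hind⟩
    · intro h hh
      have hval := (Finset.mem_filter.mp hh).2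
      exact Finset.mem_filter.mpr ⟨Finset.mem_powerset.mpr (Finset.subset_univ _),
        phiset_indep hval⟩
    · intro s hs
      exact phiset_psiseq (Finset.mem_filter.mp hs).2
    · intro h hh
      exact psiseq_phiset (Finset.mem_filter.mp hh).2
  rw [hcard]
  exact_mod_cast (BCGaux.partA a b hb hab n).1
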